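/- arXiv:1909.02245 — 2 statements merged into one kernel-verified Lean document; each statement's English description precedes it below -/
import Mathlib

section
/- Let a,b ∈ ℝ and let B be a medial limit with respect to (Ω,𝒜,P). If the class 𝓑_a^b is closed under B and g ∈ 𝓑_0^0 is admissible for B, then sol_a^b(E_g) = {B_h + B_* : h ∈ 𝓑_a^b}. -/
open MeasureTheory unitInterval

noncomputable section

/-- A bounded real sequence. -/
def IsBddSeq (x : ℕ → ℝ) : Prop := ∃ C : ℝ, ∀ n, |x n| ≤ C

/-- A Banach limit: a linear (on bounded sequences), positive, shift-invariant and
normalized functional on the space of bounded real sequences. -/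
structure BanachLimit where
  toFun : (ℕ → ℝ) → ℝ
  map_add : ∀ x y : ℕ → ℝ, IsBddSeq x → IsBddSeq y →
    toFun (fun n => x n + y n) = toFun x + toFun y
  map_smul : ∀ (c : ℝ) (x : ℕ → ℝ), IsBddSeq x →
    toFun (fun n => c * x n) = c * toFun x
  nonneg : ∀ x : ℕ → ℝ, IsBddSeq x → (∀ n, 0 ≤ x n) → 0 ≤ toFun x
  shift : ∀ x : ℕ → ℝ, IsBddSeq x → toFun (fun n => x (n + 1)) = toFun x
  norm_one : toFun (fun _ => (1 : ℝ)) = 1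

/-- A medial limit with respect to a measure `P`: a Banach limit which commutes with
integration of uniformly bounded sequences of measurable functions. -/
def BanachLimit.IsMedial {Ω : Type*} [MeasurableSpace Ω] (B : BanachLimit)
    (P : Measure Ω) : Prop :=
  ∀ h : ℕ → Ω → ℝ, (∃ C : ℝ, ∀ m ω, |h m ω| ≤ C) → (∀ m, Measurable (h m)) →
    Measurable (fun ω => B.toFun (fun m => h m ω)) ∧
      ∫ ω, B.toFun (fun m => h m ω) ∂P = B.toFun (fun m => ∫ ω, h m ω ∂P)

/-- The operator `T`, `(Th)(x) = ∫_Ω h(f(x,ω)) dP(ω)`. -/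
def Tof {Ω : Type*} [MeasurableSpace Ω] (P : Measure Ω)
    (f : unitInterval → Ω → unitInterval) (h : unitInterval → ℝ) :
    unitInterval → ℝ :=
  fun x => ∫ ω, h (f x ω) ∂P

/-- The supremum norm of a function on `[0,1]`. -/
def supNorm (h : unitInterval → ℝ) : ℝ := ⨆ x, |h x|

/-- Membership in `𝓜([0,1],ℝ)`: `h` is bounded and `ω ↦ h (f x ω)` is measurable
for every `x`. -/
def MemM {Ω : Type*} [MeasurableSpace Ω]
    (f : unitInterval → Ω → unitInterval) (h : unitInterval → ℝ) : Prop :=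
  (∃ C : ℝ, ∀ x, |h x| ≤ C) ∧ ∀ x, Measurable fun ω => h (f x ω)

/-- The function `B_h(x) = B((T^m h(x))_{m ≥ 1})`. -/
def BLof {Ω : Type*} [MeasurableSpace Ω] (P : Measure Ω)
    (f : unitInterval → Ω → unitInterval) (B : BanachLimit)
    (h : unitInterval → ℝ) : unitInterval → ℝ :=
  fun x => B.toFun fun m => (Tof P f)^[m + 1] h x

/-- The function `g_k = Σ_{l=0}^{k-1} T^l g` (meaningful for `k ≥ 1`). -/
def gk {Ω : Type*} [MeasurableSpace Ω] (P : Measure Ω)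
    (f : unitInterval → Ω → unitInterval) (g : unitInterval → ℝ) (k : ℕ) :
    unitInterval → ℝ :=
  fun x => ∑ l ∈ Finset.range k, (Tof P f)^[l] g x

/-- The family `𝒢 = {g_k : k ≥ 1}` is bounded in the supremum norm. -/
def GBdd {Ω : Type*} [MeasurableSpace Ω] (P : Measure Ω)
    (f : unitInterval → Ω → unitInterval) (g : unitInterval → ℝ) : Prop :=
  ∃ C : ℝ, ∀ k : ℕ, 1 ≤ k → ∀ x, |gk P f g k x| ≤ C

/-- The function `B_*(x) = B((g_k(x))_{k ≥ 1})`. -/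
def BStar {Ω : Type*} [MeasurableSpace Ω] (P : Measure Ω)
    (f : unitInterval → Ω → unitInterval) (B : BanachLimit)
    (g : unitInterval → ℝ) : unitInterval → ℝ :=
  fun x => B.toFun fun k => gk P f g (k + 1) x

/-- `φ` satisfies equation (E_g): `ω ↦ φ(f(x,ω))` is measurable for every `x` and
`φ(x) = ∫_Ω φ(f(x,ω)) dP(ω) + g(x)` for every `x`. -/
def SatEq {Ω : Type*} [MeasurableSpace Ω] (P : Measure Ω)
    (f : unitInterval → Ω → unitInterval) (g φ : unitInterval → ℝ) : Prop :=
  (∀ x, Measurable fun ω => φ (f x ω)) ∧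
    ∀ x, φ x = (∫ ω, φ (f x ω) ∂P) + g x

/-- The class `𝓑_a^b` is closed under the Banach limit `B`. -/
def ClosedUnder {Ω : Type*} [MeasurableSpace Ω] (P : Measure Ω)
    (f : unitInterval → Ω → unitInterval) (𝓑 : Submodule ℝ (unitInterval → ℝ))
    (a b : ℝ) (B : BanachLimit) : Prop :=
  ∀ h : unitInterval → ℝ, h ∈ 𝓑 → h 0 = a → h 1 = b →
    BLof P f B h ∈ 𝓑 ∧ BLof P f B h 0 = a ∧ BLof P f B h 1 = b


section Stmt10Aux

variable {Ω : Type*} [MeasurableSpace Ω] (P : Measure Ω) [IsProbabilityMeasure P]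
  (f : unitInterval → Ω → unitInterval)

lemma integrable_bdd {u : Ω → ℝ} (hm : Measurable u) {C : ℝ} (hb : ∀ ω, |u ω| ≤ C) :
    Integrable u P := by
  refine ⟨hm.aestronglyMeasurable, ?_⟩
  apply MeasureTheory.HasFiniteIntegral.of_bounded (C := C)
  exact Filter.Eventually.of_forall fun ω => by simpa using hb ω

lemma Tof_bound {h : unitInterval → ℝ} {C : ℝ} (hb : ∀ x, |h x| ≤ C)
    (x : unitInterval) : |Tof P f h x| ≤ C := by
  have h1 : ‖∫ ω, h (f x ω) ∂P‖ ≤ C * (P Set.univ).toReal :=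
    norm_integral_le_of_norm_le_const (Filter.Eventually.of_forall fun ω => by
      simpa using hb (f x ω))
  simpa [Tof, Real.norm_eq_abs, measure_univ] using h1

variable (𝓑 : Submodule ℝ (unitInterval → ℝ))

lemma iterate_mem (h𝓑T : ∀ h ∈ 𝓑, Tof P f h ∈ 𝓑) {h : unitInterval → ℝ}
    (hh : h ∈ 𝓑) (m : ℕ) : (Tof P f)^[m] h ∈ 𝓑 := by
  induction m with
  | zero => simpa using hh
  | succ n ih => rw [Function.iterate_succ_apply']; exact h𝓑T _ ih

lemma iterate_bound {h : unitInterval → ℝ} {C : ℝ} (hC : ∀ x, |h x| ≤ C) (m : ℕ) :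
    ∀ x, |(Tof P f)^[m] h x| ≤ C := by
  induction m with
  | zero => simpa using hC
  | succ n ih =>
    intro x
    rw [Function.iterate_succ_apply']
    exact Tof_bound P f ih x

lemma gk_mem (h𝓑T : ∀ h ∈ 𝓑, Tof P f h ∈ 𝓑) {g : unitInterval → ℝ}
    (hg : g ∈ 𝓑) (m : ℕ) : gk P f g m ∈ 𝓑 := by
  induction m with
  | zero =>
    have : gk P f g 0 = 0 := by funext x; simp [gk]
    rw [this]; exact 𝓑.zero_mem
  | succ n ih =>
    have : gk P f g (n + 1) = gk P f g n + (Tof P f)^[n] g := by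
      funext x; simp [gk, Finset.sum_range_succ]
    rw [this]
    exact 𝓑.add_mem ih (iterate_mem P f 𝓑 h𝓑T hg n)

lemma Tof_gk (h𝓑M : ∀ h ∈ 𝓑, MemM f h) (h𝓑T : ∀ h ∈ 𝓑, Tof P f h ∈ 𝓑)
    {g : unitInterval → ℝ} (hg : g ∈ 𝓑) {Cg : ℝ} (hCg : ∀ x, |g x| ≤ Cg)
    (m : ℕ) (x : unitInterval) :
    Tof P f (gk P f g m) x = gk P f g (m + 1) x - g x := by
  have hint : ∀ l : ℕ, Integrable (fun ω => (Tof P f)^[l] g (f x ω)) P := fun l =>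
    integrable_bdd P ((h𝓑M _ (iterate_mem P f 𝓑 h𝓑T hg l)).2 x)
      (fun ω => iterate_bound P f hCg l (f x ω))
  have e1 : Tof P f (gk P f g m) x
      = ∑ l ∈ Finset.range m, ∫ ω, (Tof P f)^[l] g (f x ω) ∂P := by
    simp only [Tof, gk]
    exact integral_finset_sum _ (fun l _ => hint l)
  have e2 : ∀ l : ℕ, ∫ ω, (Tof P f)^[l] g (f x ω) ∂P = (Tof P f)^[l + 1] g x := by
    intro l
    rw [Function.iterate_succ_apply']
    rfl
  have e3 : gk P f g (m + 1) x
      = (∑ l ∈ Finset.range m, (Tof P f)^[l + 1] g x) + g x := by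
    simp only [gk]
    rw [Finset.sum_range_succ']
    simp
  rw [e1, e3]
  rw [Finset.sum_congr rfl (fun l _ => e2 l)]
  ring

lemma BL_const (B : BanachLimit) (c : ℝ) : B.toFun (fun _ => c) = c := by
  have h := B.map_smul c (fun _ => 1) ⟨1, fun n => by norm_num⟩
  simp only [mul_one] at h
  rw [h, B.norm_one, mul_one]

lemma BL_sub_const (B : BanachLimit) (y : ℕ → ℝ) (hy : IsBddSeq y) (c : ℝ) :
    B.toFun (fun k => y k - c) = B.toFun y - c := by
  obtain ⟨C, hC⟩ := hy
  have hz : IsBddSeq (fun k => y k - c) := ⟨C + |c|, fun n => by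
    calc |y n - c| ≤ |y n| + |c| := abs_sub _ _
    _ ≤ C + |c| := by linarith [hC n]⟩
  have h := B.map_add (fun k => y k - c) (fun _ => c) hz ⟨|c|, fun n => le_refl _⟩
  have h2 : (fun n => (y n - c) + c) = y := by funext n; ring
  rw [h2] at h
  rw [h, BL_const]
  ring

end Stmt10Aux

/-- If `𝓑_a^b` is closed under a medial limit `B` and `g ∈ 𝓑_0^0`
is admissible for `B`, then `sol_a^b(E_g) = {B_h + B_* : h ∈ 𝓑_a^b}`. -/
theorem stmt_10 {Ω : Type*} [MeasurableSpace Ω] (P : Measure Ω) [IsProbabilityMeasure P]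
    (f : unitInterval → Ω → unitInterval)
    (hf0 : ∀ ω, f 0 ω = 0) (hf1 : ∀ ω, f 1 ω = 1)
    (𝓑 : Submodule ℝ (unitInterval → ℝ))
    (h𝓑M : ∀ h ∈ 𝓑, MemM f h)
    (h𝓑T : ∀ h ∈ 𝓑, Tof P f h ∈ 𝓑)
    (a b : ℝ) (B : BanachLimit) (hB : B.IsMedial P)
    (hclosed : ClosedUnder P f 𝓑 a b B)
    (g : unitInterval → ℝ) (hg : g ∈ 𝓑) (hg0 : g 0 = 0) (hg1 : g 1 = 0)
    (hadm : GBdd P f g ∧ BStar P f B g ∈ 𝓑 ∧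
      BStar P f B g 0 = 0 ∧ BStar P f B g 1 = 0) :
    {φ : unitInterval → ℝ | φ ∈ 𝓑 ∧ φ 0 = a ∧ φ 1 = b ∧ SatEq P f g φ} =
      {ψ : unitInterval → ℝ | ∃ h ∈ 𝓑, h 0 = a ∧ h 1 = b ∧
        ψ = fun x => BLof P f B h x + BStar P f B g x} := by
  ext φ
  simp only [Set.mem_setOf_eq]
  obtain ⟨hGb, hBst, hBst0, hBst1⟩ := hadm
  obtain ⟨CG, hCG⟩ := hGb
  obtain ⟨⟨Cg, hCg⟩, hgm⟩ := h𝓑M g hg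
  have hgkb : ∀ (m : ℕ) (x : unitInterval), |gk P f g (m + 1) x| ≤ CG :=
    fun m x => hCG (m + 1) (Nat.le_add_left 1 m) x
  -- B applied to the sequence Tof(gk (k+1)) x
  have key_gk : ∀ x, B.toFun (fun k => Tof P f (gk P f g (k + 1)) x)
      = BStar P f B g x - g x := by
    intro x
    have e1 : (fun k => Tof P f (gk P f g (k + 1)) x)
        = fun k => gk P f g (k + 2) x - g x := by
      funext k
      exact Tof_gk P f 𝓑 h𝓑M h𝓑T hg hCg (k + 1) x
    rw [e1]
    have e2 : B.toFun (fun k => gk P f g (k + 2) x - g x)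
        = B.toFun (fun k => gk P f g (k + 2) x) - g x :=
      BL_sub_const B _ ⟨CG, fun k => hgkb (k + 1) x⟩ (g x)
    rw [e2]
    have e3 := B.shift (fun k => gk P f g (k + 1) x) ⟨CG, fun k => hgkb k x⟩
    rw [show (fun k => gk P f g (k + 2) x) =
      (fun k => (fun m => gk P f g (m + 1) x) (k + 1)) from rfl, e3]
    rfl
  -- the integral identity for BStar
  have medistar : ∀ x, ∫ ω, BStar P f B g (f x ω) ∂P = BStar P f B g x - g x := by
    intro x
    have hmeas : ∀ k : ℕ, Measurable (fun ω => gk P f g (k + 1) (f x ω)) :=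
      fun k => (h𝓑M _ (gk_mem P f 𝓑 h𝓑T hg (k + 1))).2 x
    have hbd : ∃ C : ℝ, ∀ (k : ℕ) (ω : Ω), |gk P f g (k + 1) (f x ω)| ≤ C :=
      ⟨CG, fun k ω => hgkb k (f x ω)⟩
    have h := (hB (fun k ω => gk P f g (k + 1) (f x ω)) hbd hmeas).2
    have e : (fun k => ∫ ω, gk P f g (k + 1) (f x ω) ∂P)
        = fun k => Tof P f (gk P f g (k + 1)) x := rfl
    rw [e] at h
    rw [show (∫ ω, BStar P f B g (f x ω) ∂P)
      = ∫ ω, B.toFun (fun k => gk P f g (k + 1) (f x ω)) ∂P from rfl, h, key_gk x]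
  constructor
  · -- solution ⟹ representation
    rintro ⟨hφ𝓑, hφ0, hφ1, hφm, hφeq⟩
    refine ⟨φ, hφ𝓑, hφ0, hφ1, ?_⟩
    funext x
    obtain ⟨⟨Cφ, hCφ⟩, hφm'⟩ := h𝓑M φ hφ𝓑
    -- key identity φ = T^[m+1] φ + g_{m+1}
    have claim : ∀ (m : ℕ) (y : unitInterval),
        φ y = (Tof P f)^[m + 1] φ y + gk P f g (m + 1) y := by
      intro m
      induction m with
      | zero =>
        intro y
        have : gk P f g 1 y = g y := by simp [gk]
        rw [this, Function.iterate_one]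
        exact hφeq y
      | succ n ih =>
        intro y
        have hintφ : Integrable (fun ω => (Tof P f)^[n + 1] φ (f y ω)) P :=
          integrable_bdd P ((h𝓑M _ (iterate_mem P f 𝓑 h𝓑T hφ𝓑 (n + 1))).2 y)
            (fun ω => iterate_bound P f hCφ (n + 1) (f y ω))
        have hintg : Integrable (fun ω => gk P f g (n + 1) (f y ω)) P :=
          integrable_bdd P ((h𝓑M _ (gk_mem P f 𝓑 h𝓑T hg (n + 1))).2 y)
            (fun ω => hgkb n (f y ω))
        have e1 : (∫ ω, φ (f y ω) ∂P)
            = (∫ ω, (Tof P f)^[n + 1] φ (f y ω) ∂P)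
              + ∫ ω, gk P f g (n + 1) (f y ω) ∂P := by
          rw [← integral_add hintφ hintg]
          exact integral_congr_ae (Filter.Eventually.of_forall fun ω => ih (f y ω))
        have e2 : (∫ ω, (Tof P f)^[n + 1] φ (f y ω) ∂P) = (Tof P f)^[n + 2] φ y := by
          conv_rhs => rw [Function.iterate_succ_apply']
          rfl
        have e3 : (∫ ω, gk P f g (n + 1) (f y ω) ∂P)
            = gk P f g (n + 2) y - g y :=
          Tof_gk P f 𝓑 h𝓑M h𝓑T hg hCg (n + 1) y
        have := hφeq y
        rw [e1, e2, e3] at this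
        rw [this]; ring
    have e4 : (fun m : ℕ => (Tof P f)^[m + 1] φ x + gk P f g (m + 1) x)
        = fun _ : ℕ => φ x := by
      funext m; rw [← claim m x]
    have e5 := B.map_add (fun m => (Tof P f)^[m + 1] φ x)
      (fun m => gk P f g (m + 1) x)
      ⟨Cφ, fun m => iterate_bound P f hCφ (m + 1) x⟩
      ⟨CG, fun m => hgkb m x⟩
    rw [e4, BL_const] at e5
    exact e5
  · -- representation ⟹ solution
    rintro ⟨h, hh, ha', hb', rfl⟩
    obtain ⟨hBL, hBL0, hBL1⟩ := hclosed h hh ha' hb'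
    have hψ𝓑 : (fun x => BLof P f B h x + BStar P f B g x) ∈ 𝓑 := by
      have : (fun x => BLof P f B h x + BStar P f B g x)
          = BLof P f B h + BStar P f B g := rfl
      rw [this]; exact 𝓑.add_mem hBL hBst
    obtain ⟨Ch, hCh⟩ := (h𝓑M h hh).1
    -- BLof is a fixed point of Tof
    have medishift : ∀ x, ∫ ω, BLof P f B h (f x ω) ∂P = BLof P f B h x := by
      intro x
      have hmeas : ∀ m : ℕ, Measurable (fun ω => (Tof P f)^[m + 1] h (f x ω)) :=
        fun m => (h𝓑M _ (iterate_mem P f 𝓑 h𝓑T hh (m + 1))).2 x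
      have hbd : ∃ C : ℝ, ∀ (m : ℕ) (ω : Ω), |(Tof P f)^[m + 1] h (f x ω)| ≤ C :=
        ⟨Ch, fun m ω => iterate_bound P f hCh (m + 1) (f x ω)⟩
      have hmed := (hB (fun m ω => (Tof P f)^[m + 1] h (f x ω)) hbd hmeas).2
      have e : (fun m => ∫ ω, (Tof P f)^[m + 1] h (f x ω) ∂P)
          = fun m => (Tof P f)^[m + 2] h x := by
        funext m
        conv_rhs => rw [Function.iterate_succ_apply']
        rfl
      rw [e] at hmed
      have e2 := B.shift (fun m => (Tof P f)^[m + 1] h x)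
        ⟨Ch, fun m => iterate_bound P f hCh (m + 1) x⟩
      rw [show (∫ ω, BLof P f B h (f x ω) ∂P)
        = ∫ ω, B.toFun (fun m => (Tof P f)^[m + 1] h (f x ω)) ∂P from rfl, hmed]
      exact e2
    refine ⟨hψ𝓑, ?_, ?_, ?_, ?_⟩
    · show BLof P f B h 0 + BStar P f B g 0 = a
      rw [hBL0, hBst0, add_zero]
    · show BLof P f B h 1 + BStar P f B g 1 = b
      rw [hBL1, hBst1, add_zero]
    · exact (h𝓑M _ hψ𝓑).2
    · intro x
      obtain ⟨CBL, hCBL⟩ := (h𝓑M _ hBL).1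
      obtain ⟨CBS, hCBS⟩ := (h𝓑M _ hBst).1
      have hint1 : Integrable (fun ω => BLof P f B h (f x ω)) P :=
        integrable_bdd P ((h𝓑M _ hBL).2 x) (fun ω => hCBL (f x ω))
      have hint2 : Integrable (fun ω => BStar P f B g (f x ω)) P :=
        integrable_bdd P ((h𝓑M _ hBst).2 x) (fun ω => hCBS (f x ω))
      rw [show (∫ ω, (fun z => BLof P f B h z + BStar P f B g z) (f x ω) ∂P)
        = ∫ ω, (BLof P f B h (f x ω) + BStar P f B g (f x ω)) ∂P from rfl,
        integral_add hint1 hint2, medishift x, medistar x]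
      ring
end
end

section
/- The equation φ(x) = Σ_{n∈ℕ} p_n φ(f_n(x)) + g(x) (x ∈ [0,1]) has a bounded solution φ : [0,1] → ℝ if and only if the family {g_k : k ≥ 1} is bounded in the supremum norm. Moreover, if this family is bounded, then a bounded φ : [0,1] → ℝ is a solution of this equation if and only if φ = B_h + B_* for some Banach limit B and some bounded h : [0,1] → ℝ. -/
open MeasureTheory unitInterval

noncomputable section

/-- The operator `T` in the discrete setting: `(Th)(x) = Σ_n p_n h(f_n(x))`. -/
def Tseq (p : ℕ → ℝ) (fn : ℕ → unitInterval → unitInterval)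
    (h : unitInterval → ℝ) : unitInterval → ℝ :=
  fun x => ∑' n, p n * h (fn n x)

/-- `g_k = Σ_{l=0}^{k-1} T^l g` in the discrete setting. -/
def gkSeq (p : ℕ → ℝ) (fn : ℕ → unitInterval → unitInterval)
    (g : unitInterval → ℝ) (k : ℕ) : unitInterval → ℝ :=
  fun x => ∑ l ∈ Finset.range k, (Tseq p fn)^[l] g x
/-!
Since `p` is a probability vector, `T` is linear and non-expansive on bounded functions.
Iterating the equation gives `φ = T^k φ + g_k`, so a bounded solution bounds the `g_k`.
Conversely, a Banach limit commutes with the series defining `T` (dominated convergence),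
so shift invariance makes `B_h` a fixed point of `T`, while `T g_k = g_{k+1} - g` gives
`T B_* = B_* - g`; hence `B_h + B_*` solves the equation. Every bounded solution `φ` is
`B_φ + B_*`, because `T^{m+1} φ = φ - g_{m+1}`. A Banach limit exists: take the limit of
the Cesàro means along a free ultrafilter.
-/

open Filter Topology

lemma isBddSeq_const (c : ℝ) : IsBddSeq fun _ => c := ⟨|c|, fun _ => le_rfl⟩

lemma IsBddSeq.sub {x y : ℕ → ℝ} (hx : IsBddSeq x) (hy : IsBddSeq y) :
    IsBddSeq fun n => x n - y n := by
  obtain ⟨C, hC⟩ := hx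
  obtain ⟨D, hD⟩ := hy
  exact ⟨C + D, fun n => (abs_sub _ _).trans (add_le_add (hC n) (hD n))⟩

lemma abs_tsum_le_tsum_of_abs_le {a c : ℕ → ℝ} (hc : Summable c) (ha : ∀ n, |a n| ≤ c n) :
    |∑' n, a n| ≤ ∑' n, c n :=
  tsum_of_norm_bounded (f := a) hc.hasSum ha

namespace BanachLimit

variable (B : BanachLimit) {x y : ℕ → ℝ} {C : ℝ}

lemma map_const (c : ℝ) : B.toFun (fun _ => c) = c := by
  have h := B.map_smul c (fun _ => 1) (isBddSeq_const 1)
  simp only [mul_one] at h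
  rw [h, B.norm_one, mul_one]

lemma map_sub (hx : IsBddSeq x) (hy : IsBddSeq y) :
    B.toFun (fun n => x n - y n) = B.toFun x - B.toFun y := by
  obtain ⟨D, hD⟩ := hy
  have hny : IsBddSeq fun n => -1 * y n := ⟨D, fun n => by simpa using hD n⟩
  have h := B.map_add x _ hx hny
  rw [B.map_smul (-1) y ⟨D, hD⟩] at h
  simpa [sub_eq_add_neg] using h

lemma abs_le (hx : ∀ n, |x n| ≤ C) : |B.toFun x| ≤ C := by
  have hupper := B.nonneg _ ((isBddSeq_const C).sub ⟨C, hx⟩)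
    fun n => sub_nonneg.2 (_root_.abs_le.1 (hx n)).2
  have hlower := B.nonneg _ (IsBddSeq.sub ⟨C, hx⟩ (isBddSeq_const (-C)))
    fun n => sub_nonneg.2 (_root_.abs_le.1 (hx n)).1
  rw [B.map_sub (isBddSeq_const C) ⟨C, hx⟩, map_const] at hupper
  rw [B.map_sub ⟨C, hx⟩ (isBddSeq_const (-C)), map_const] at hlower
  exact _root_.abs_le.2 ⟨by linarith, by linarith⟩

lemma map_finset_sum {ι : Type*} (s : Finset ι) {u : ι → ℕ → ℝ} {c : ι → ℝ}
    (hu : ∀ i k, |u i k| ≤ c i) :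
    B.toFun (fun k => ∑ i ∈ s, u i k) = ∑ i ∈ s, B.toFun (u i) := by
  classical
  induction s using Finset.induction_on with
  | empty => simpa using B.map_const 0
  | insert i s hi ih =>
    have hsum : IsBddSeq fun k => ∑ j ∈ s, u j k :=
      ⟨∑ j ∈ s, c j, fun k => (Finset.abs_sum_le_sum_abs _ _).trans
        (Finset.sum_le_sum fun j _ => hu j k)⟩
    simp only [Finset.sum_insert hi]
    rw [B.map_add _ _ ⟨c i, hu i⟩ hsum, ih]

lemma map_tsum {w : ℕ → ℕ → ℝ} {c : ℕ → ℝ} (hc : Summable c) (hw : ∀ n k, |w n k| ≤ c n) :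
    B.toFun (fun k => ∑' n, w n k) = ∑' n, B.toFun (w n) := by
  have hws (k : ℕ) : Summable fun n => w n k := hc.of_norm_bounded fun n => hw n k
  have htail (N k : ℕ) : |∑' n, w (n + N) k| ≤ ∑' n, c (n + N) :=
    abs_tsum_le_tsum_of_abs_le ((summable_nat_add_iff N).2 hc) fun n => hw _ k
  have hpartial (N : ℕ) :
      |B.toFun (fun k => ∑' n, w n k) - ∑ n ∈ Finset.range N, B.toFun (w n)| ≤ ∑' n, c (n + N) := by
    rw [← B.map_finset_sum _ hw, ← B.map_sub ⟨∑' n, c n, fun k => abs_tsum_le_tsum_of_abs_le hc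
      fun n => hw n k⟩ ⟨∑ n ∈ Finset.range N, c n, fun k => (Finset.abs_sum_le_sum_abs _ _).trans
        (Finset.sum_le_sum fun n _ => hw n k)⟩]
    refine B.abs_le fun k => ?_
    rw [← (hws k).sum_add_tsum_nat_add N, add_sub_cancel_left]
    exact htail N k
  have hlim : Tendsto (fun N => ∑ n ∈ Finset.range N, B.toFun (w n)) atTop
      (𝓝 (B.toFun fun k => ∑' n, w n k)) := by
    rw [tendsto_iff_norm_sub_tendsto_zero]
    refine squeeze_zero (fun _ => norm_nonneg _) (fun N => ?_) (tendsto_sum_nat_add c)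
    rw [norm_sub_rev]
    exact hpartial N
  exact tendsto_nhds_unique hlim
    (hc.of_norm_bounded fun n => B.abs_le (hw n)).hasSum.tendsto_sum_nat

end BanachLimit

/-- `cesaroMean x 0 = 0` is a junk value, harmless since only limits along a free ultrafilter
are taken. -/
def cesaroMean (x : ℕ → ℝ) (n : ℕ) : ℝ := (∑ i ∈ Finset.range n, x i) / n

lemma abs_cesaroMean_le {x : ℕ → ℝ} {C : ℝ} (hx : ∀ n, |x n| ≤ C) (n : ℕ) :
    |cesaroMean x n| ≤ C := by
  rcases n.eq_zero_or_pos with rfl | hn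
  · simpa [cesaroMean] using (abs_nonneg _).trans (hx 0)
  · rw [cesaroMean, abs_div, Nat.abs_cast, div_le_iff₀ (by positivity)]
    calc |∑ i ∈ Finset.range n, x i| ≤ ∑ i ∈ Finset.range n, |x i| :=
          Finset.abs_sum_le_sum_abs _ _
      _ ≤ ∑ _i ∈ Finset.range n, C := Finset.sum_le_sum fun i _ => hx i
      _ = C * n := by simp [mul_comm]

lemma tendsto_cesaroMean_shift_sub {x : ℕ → ℝ} (hx : IsBddSeq x) :
    Tendsto (fun n => cesaroMean (fun k => x (k + 1)) n - cesaroMean x n) atTop (𝓝 0) := by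
  obtain ⟨C, hC⟩ := hx
  have htel (n : ℕ) : cesaroMean (fun k => x (k + 1)) n - cesaroMean x n = (x n - x 0) / n := by
    rw [cesaroMean, cesaroMean, ← sub_div, ← Finset.sum_sub_distrib, Finset.sum_range_sub]
  simp_rw [htel]
  refine squeeze_zero_norm (fun n => ?_) (tendsto_const_div_atTop_nhds_zero_nat (C + C))
  rw [Real.norm_eq_abs, abs_div, Nat.abs_cast]
  exact div_le_div_of_nonneg_right ((abs_sub _ _).trans (add_le_add (hC n) (hC 0))) n.cast_nonneg

def cesaroLimit (x : ℕ → ℝ) : ℝ := (hyperfilter ℕ : Filter ℕ).limUnder (cesaroMean x)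

lemma tendsto_cesaroLimit {x : ℕ → ℝ} (hx : IsBddSeq x) :
    Tendsto (cesaroMean x) (hyperfilter ℕ) (𝓝 (cesaroLimit x)) := by
  obtain ⟨C, hC⟩ := hx
  obtain ⟨a, -, ha⟩ := isCompact_Icc.ultrafilter_le_nhds ((hyperfilter ℕ).map (cesaroMean x))
    (by
      rw [Ultrafilter.coe_map]
      exact tendsto_principal.2 (.of_forall fun n => abs_le.1 (abs_cesaroMean_le hC n)))
  exact tendsto_nhds_limUnder ⟨a, by rwa [Ultrafilter.coe_map] at ha⟩

def cesaroBanachLimit : BanachLimit where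
  toFun := cesaroLimit
  map_add x y hx hy :=
    ((tendsto_cesaroLimit hx).add (tendsto_cesaroLimit hy)).congr
      (fun n => by simp only [cesaroMean, Finset.sum_add_distrib, add_div]) |>.limUnder_eq
  map_smul c x hx :=
    ((tendsto_cesaroLimit hx).const_mul c).congr
      (fun n => by simp only [cesaroMean, ← Finset.mul_sum, mul_div_assoc]) |>.limUnder_eq
  nonneg x hx hpos := ge_of_tendsto' (tendsto_cesaroLimit hx) fun n =>
    div_nonneg (Finset.sum_nonneg fun i _ => hpos i) n.cast_nonneg
  shift x hx :=
    ((tendsto_cesaroLimit hx).add ((tendsto_cesaroMean_shift_sub hx).mono_left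
      Nat.hyperfilter_le_atTop)).congr (fun n => add_sub_cancel _ _)
      |>.limUnder_eq.trans (add_zero _)
  norm_one := by
    refine tendsto_const_nhds.congr' ?_ |>.limUnder_eq
    filter_upwards [Nat.hyperfilter_le_atTop (eventually_ge_atTop 1)] with n hn
    simp [cesaroMean, Nat.one_le_iff_ne_zero.1 hn]

lemma summable_of_tsum_eq_one {p : ℕ → ℝ} (hpsum : ∑' n, p n = 1) : Summable p := by
  by_contra h
  simp [tsum_eq_zero_of_not_summable h] at hpsum

section Tseq

variable {p : ℕ → ℝ} {fn : ℕ → unitInterval → unitInterval} (hp : ∀ n, 0 ≤ p n)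
include hp

lemma abs_mul_le_mul_of_abs_le {a C : ℝ} (n : ℕ) (ha : |a| ≤ C) : |p n * a| ≤ p n * C := by
  rw [abs_mul, abs_of_nonneg (hp n)]
  exact mul_le_mul_of_nonneg_left ha (hp n)

variable (hP : Summable p)
include hP

lemma summable_mul_of_abs_le {a : ℕ → ℝ} {C : ℝ} (ha : ∀ n, |a n| ≤ C) :
    Summable fun n => p n * a n :=
  (hP.mul_right C).of_norm_bounded fun n => abs_mul_le_mul_of_abs_le hp n (ha n)

lemma Tseq_add {u v : unitInterval → ℝ} {C D : ℝ} (hu : ∀ x, |u x| ≤ C) (hv : ∀ x, |v x| ≤ D) :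
    Tseq p fn (u + v) = Tseq p fn u + Tseq p fn v := by
  funext x
  simp only [Tseq, Pi.add_apply, mul_add]
  exact (summable_mul_of_abs_le hp hP fun n => hu (fn n x)).tsum_add
    (summable_mul_of_abs_le hp hP fun n => hv (fn n x))

lemma Tseq_sum {ι : Type*} (s : Finset ι) {u : ι → unitInterval → ℝ} {c : ι → ℝ}
    (hu : ∀ i x, |u i x| ≤ c i) :
    Tseq p fn (∑ i ∈ s, u i) = ∑ i ∈ s, Tseq p fn (u i) := by
  funext x
  simp only [Tseq, Finset.sum_apply, Finset.mul_sum]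
  exact Summable.tsum_finsetSum fun i _ => summable_mul_of_abs_le hp hP fun n => hu i (fn n x)

lemma Tseq_banachLimit (B : BanachLimit) {u : ℕ → unitInterval → ℝ} {C : ℝ}
    (hu : ∀ m x, |u m x| ≤ C) (x : unitInterval) :
    Tseq p fn (fun y => B.toFun fun m => u m y) x = B.toFun fun m => Tseq p fn (u m) x := by
  simp only [Tseq]
  rw [B.map_tsum (hP.mul_right C) fun n m => abs_mul_le_mul_of_abs_le hp n (hu m (fn n x))]
  exact tsum_congr fun n => (B.map_smul (p n) _ ⟨C, fun m => hu m (fn n x)⟩).symm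

variable (hpsum : ∑' n, p n = 1)
include hpsum

lemma abs_Tseq_le {h : unitInterval → ℝ} {C : ℝ} (hh : ∀ x, |h x| ≤ C) (x : unitInterval) :
    |Tseq p fn h x| ≤ C := by
  have := abs_tsum_le_tsum_of_abs_le (hP.mul_right C) fun n =>
    abs_mul_le_mul_of_abs_le hp n (hh (fn n x))
  rwa [tsum_mul_right, hpsum, one_mul] at this

lemma abs_iterate_Tseq_le {h : unitInterval → ℝ} {C : ℝ} (hh : ∀ x, |h x| ≤ C) (k : ℕ)
    (x : unitInterval) : |(Tseq p fn)^[k] h x| ≤ C := by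
  induction k generalizing x with
  | zero => exact hh x
  | succ k ih =>
    rw [Function.iterate_succ_apply']
    exact abs_Tseq_le hp hP hpsum ih x

lemma iterate_Tseq_add {u v : unitInterval → ℝ} {C D : ℝ} (hu : ∀ x, |u x| ≤ C)
    (hv : ∀ x, |v x| ≤ D) (k : ℕ) :
    (Tseq p fn)^[k] (u + v) = (Tseq p fn)^[k] u + (Tseq p fn)^[k] v := by
  induction k with
  | zero => rfl
  | succ k ih =>
    rw [Function.iterate_succ_apply', Function.iterate_succ_apply',
      Function.iterate_succ_apply', ih, Tseq_add hp hP (abs_iterate_Tseq_le hp hP hpsum hu k)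
        (abs_iterate_Tseq_le hp hP hpsum hv k)]

end Tseq

section Solutions

variable {p : ℕ → ℝ} {fn : ℕ → unitInterval → unitInterval} {g : unitInterval → ℝ}

lemma gkSeq_eq_sum (k : ℕ) : gkSeq p fn g k = ∑ l ∈ Finset.range k, (Tseq p fn)^[l] g := by
  funext x
  simp [gkSeq, Finset.sum_apply]

lemma gkSeq_one : gkSeq p fn g 1 = g := by
  simp [gkSeq_eq_sum]

/-- The function `B_h + B_*`. -/
def banachSolution (p : ℕ → ℝ) (fn : ℕ → unitInterval → unitInterval) (g : unitInterval → ℝ)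
    (B : BanachLimit) (h : unitInterval → ℝ) : unitInterval → ℝ :=
  fun x => B.toFun (fun m => (Tseq p fn)^[m + 1] h x) + B.toFun (fun k => gkSeq p fn g (k + 1) x)

variable (hp : ∀ n, 0 ≤ p n) (hP : Summable p) (hpsum : ∑' n, p n = 1)
include hp hP hpsum

lemma Tseq_gkSeq {C : ℝ} (hg : ∀ x, |g x| ≤ C) (k : ℕ) :
    Tseq p fn (gkSeq p fn g k) = gkSeq p fn g (k + 1) - g := by
  rw [gkSeq_eq_sum, Tseq_sum hp hP _ fun l => abs_iterate_Tseq_le hp hP hpsum hg l, gkSeq_eq_sum,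
    Finset.sum_range_succ']
  simp only [← Function.iterate_succ_apply' (Tseq p fn), Function.iterate_zero, id,
    add_sub_cancel_right]

lemma gkSeq_eq_sub_iterate {φ : unitInterval → ℝ} {C : ℝ} (hφ : ∀ x, |φ x| ≤ C)
    (hsol : φ = Tseq p fn φ + g) (k : ℕ) : gkSeq p fn g k = φ - (Tseq p fn)^[k] φ := by
  have hg (x : unitInterval) : |g x| ≤ C + C := by
    rw [eq_sub_of_add_eq' (congrFun hsol x).symm]
    exact (abs_sub _ _).trans (add_le_add (hφ x) (abs_Tseq_le hp hP hpsum hφ x))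
  have hstep (l : ℕ) : (Tseq p fn)^[l] g = (Tseq p fn)^[l] φ - (Tseq p fn)^[l + 1] φ := by
    have h := iterate_Tseq_add (fn := fn) hp hP hpsum (abs_Tseq_le (fn := fn) hp hP hpsum hφ) hg l
    rw [← hsol, ← Function.iterate_succ_apply] at h
    rw [h, add_sub_cancel_left]
  rw [gkSeq_eq_sum]
  simp only [hstep]
  exact Finset.sum_range_sub' _ k

lemma abs_gkSeq_le_of_eq_Tseq_add {φ : unitInterval → ℝ} {C : ℝ} (hφ : ∀ x, |φ x| ≤ C)
    (hsol : φ = Tseq p fn φ + g) (k : ℕ) (x : unitInterval) : |gkSeq p fn g k x| ≤ C + C := by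
  rw [gkSeq_eq_sub_iterate hp hP hpsum hφ hsol]
  exact (abs_sub _ _).trans (add_le_add (hφ x) (abs_iterate_Tseq_le hp hP hpsum hφ k x))

lemma eq_banachSolution_of_eq_Tseq_add (B : BanachLimit) {φ : unitInterval → ℝ} {C : ℝ}
    (hφ : ∀ x, |φ x| ≤ C) (hsol : φ = Tseq p fn φ + g) : φ = banachSolution p fn g B φ := by
  funext x
  have hiter (m : ℕ) : (Tseq p fn)^[m + 1] φ x = φ x - gkSeq p fn g (m + 1) x := by
    simp [gkSeq_eq_sub_iterate hp hP hpsum hφ hsol]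
  simp only [banachSolution, hiter]
  rw [B.map_sub (isBddSeq_const _)
    ⟨C + C, fun m => abs_gkSeq_le_of_eq_Tseq_add hp hP hpsum hφ hsol (m + 1) x⟩, B.map_const]
  ring

lemma Tseq_banachLimit_iterate (B : BanachLimit) {h : unitInterval → ℝ} {C : ℝ}
    (hh : ∀ x, |h x| ≤ C) :
    Tseq p fn (fun x => B.toFun fun m => (Tseq p fn)^[m + 1] h x) =
      fun x => B.toFun fun m => (Tseq p fn)^[m + 1] h x := by
  funext x
  rw [Tseq_banachLimit hp hP B (fun m => abs_iterate_Tseq_le hp hP hpsum hh (m + 1)) x]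
  simp only [← Function.iterate_succ_apply' (Tseq p fn)]
  exact B.shift (fun m => (Tseq p fn)^[m + 1] h x)
    ⟨C, fun m => abs_iterate_Tseq_le hp hP hpsum hh (m + 1) x⟩

variable {C : ℝ} (hG : ∀ k : ℕ, 1 ≤ k → ∀ x, |gkSeq p fn g k x| ≤ C)
include hG

lemma Tseq_banachLimit_gkSeq (B : BanachLimit) :
    Tseq p fn (fun x => B.toFun fun k => gkSeq p fn g (k + 1) x) =
      (fun x => B.toFun fun k => gkSeq p fn g (k + 1) x) - g := by
  have hg : ∀ x, |g x| ≤ C := by simpa [gkSeq_one] using hG 1 le_rfl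
  have hG' (k : ℕ) (x : unitInterval) : |gkSeq p fn g (k + 1) x| ≤ C :=
    hG (k + 1) (Nat.le_add_left 1 k) x
  funext x
  rw [Tseq_banachLimit hp hP B hG' x]
  simp only [Tseq_gkSeq hp hP hpsum hg, Pi.sub_apply]
  rw [B.map_sub ⟨C, fun k => hG' (k + 1) x⟩ (isBddSeq_const _), B.map_const,
    B.shift (fun k => gkSeq p fn g (k + 1) x) ⟨C, fun k => hG' k x⟩]

lemma banachSolution_eq_Tseq_add (B : BanachLimit) {h : unitInterval → ℝ} {Ch : ℝ}
    (hh : ∀ x, |h x| ≤ Ch) :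
    banachSolution p fn g B h = Tseq p fn (banachSolution p fn g B h) + g := by
  have hBh (x : unitInterval) : |B.toFun fun m => (Tseq p fn)^[m + 1] h x| ≤ Ch :=
    B.abs_le fun m => abs_iterate_Tseq_le hp hP hpsum hh (m + 1) x
  have hBG (x : unitInterval) : |B.toFun fun k => gkSeq p fn g (k + 1) x| ≤ C :=
    B.abs_le fun k => hG (k + 1) (Nat.le_add_left 1 k) x
  change _ = Tseq p fn ((fun x => _) + fun x => _) + g
  rw [Tseq_add hp hP hBh hBG, Tseq_banachLimit_iterate hp hP hpsum B hh,
    Tseq_banachLimit_gkSeq hp hP hpsum hG B, add_assoc, sub_add_cancel]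
  rfl

lemma abs_banachSolution_le (B : BanachLimit) {h : unitInterval → ℝ} {Ch : ℝ}
    (hh : ∀ x, |h x| ≤ Ch) (x : unitInterval) : |banachSolution p fn g B h x| ≤ Ch + C :=
  (abs_add_le _ _).trans (add_le_add
    (B.abs_le fun m => abs_iterate_Tseq_le hp hP hpsum hh (m + 1) x)
    (B.abs_le fun k => hG (k + 1) (Nat.le_add_left 1 k) x))

end Solutions

theorem stmt_13_general (fn : ℕ → unitInterval → unitInterval)
    (p : ℕ → ℝ) (hp : ∀ n, 0 ≤ p n) (hpsum : ∑' n, p n = 1)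
    (g : unitInterval → ℝ) :
    ((∃ φ : unitInterval → ℝ, (∃ C : ℝ, ∀ x, |φ x| ≤ C) ∧
        ∀ x, φ x = (∑' n, p n * φ (fn n x)) + g x) ↔
      (∃ C : ℝ, ∀ k : ℕ, 1 ≤ k → ∀ x, |gkSeq p fn g k x| ≤ C)) ∧
    ((∃ C : ℝ, ∀ k : ℕ, 1 ≤ k → ∀ x, |gkSeq p fn g k x| ≤ C) →
      ∀ φ : unitInterval → ℝ, (∃ C : ℝ, ∀ x, |φ x| ≤ C) →
        ((∀ x, φ x = (∑' n, p n * φ (fn n x)) + g x) ↔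
          ∃ B : BanachLimit, ∃ h : unitInterval → ℝ, (∃ C : ℝ, ∀ x, |h x| ≤ C) ∧
            φ = fun x => B.toFun (fun m => (Tseq p fn)^[m + 1] h x) +
              B.toFun (fun k => gkSeq p fn g (k + 1) x))) := by
  have hP := summable_of_tsum_eq_one hpsum
  refine ⟨⟨?_, ?_⟩, ?_⟩
  · rintro ⟨φ, ⟨C, hφ⟩, hsol⟩
    exact ⟨C + C, fun k _ => abs_gkSeq_le_of_eq_Tseq_add hp hP hpsum hφ (funext hsol) k⟩
  · rintro ⟨C, hG⟩
    have h0 : ∀ x : unitInterval, |(0 : unitInterval → ℝ) x| ≤ 0 := by simp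
    exact ⟨banachSolution p fn g cesaroBanachLimit 0,
      ⟨0 + C, abs_banachSolution_le hp hP hpsum hG _ h0⟩,
      congrFun (banachSolution_eq_Tseq_add hp hP hpsum hG _ h0)⟩
  · rintro ⟨C, hG⟩ φ ⟨Cφ, hφ⟩
    constructor
    · intro hsol
      exact ⟨cesaroBanachLimit, φ, ⟨Cφ, hφ⟩,
        eq_banachSolution_of_eq_Tseq_add hp hP hpsum _ hφ (funext hsol)⟩
    · rintro ⟨B, h, ⟨Ch, hh⟩, rfl⟩
      exact congrFun (banachSolution_eq_Tseq_add hp hP hpsum hG B hh)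

/-- The equation `φ(x) = Σ_n p_n φ(f_n(x)) + g(x)` has a bounded
solution iff the family `{g_k : k ≥ 1}` is bounded in the supremum norm; moreover,
in that case a bounded `φ` is a solution iff `φ = B_h + B_*` for some Banach limit
`B` and some bounded `h`. -/
theorem stmt_13 (fn : ℕ → unitInterval → unitInterval)
    (hfn0 : ∀ n, fn n 0 = 0) (hfn1 : ∀ n, fn n 1 = 1)
    (p : ℕ → ℝ) (hp : ∀ n, 0 ≤ p n) (hpsum : ∑' n, p n = 1)
    (g : unitInterval → ℝ) (hgbd : ∃ C : ℝ, ∀ x, |g x| ≤ C)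
    (hg0 : g 0 = 0) (hg1 : g 1 = 0) :
    ((∃ φ : unitInterval → ℝ, (∃ C : ℝ, ∀ x, |φ x| ≤ C) ∧
        ∀ x, φ x = (∑' n, p n * φ (fn n x)) + g x) ↔
      (∃ C : ℝ, ∀ k : ℕ, 1 ≤ k → ∀ x, |gkSeq p fn g k x| ≤ C)) ∧
    ((∃ C : ℝ, ∀ k : ℕ, 1 ≤ k → ∀ x, |gkSeq p fn g k x| ≤ C) →
      ∀ φ : unitInterval → ℝ, (∃ C : ℝ, ∀ x, |φ x| ≤ C) →
        ((∀ x, φ x = (∑' n, p n * φ (fn n x)) + g x) ↔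
          ∃ B : BanachLimit, ∃ h : unitInterval → ℝ, (∃ C : ℝ, ∀ x, |h x| ≤ C) ∧
            φ = fun x => B.toFun (fun m => (Tseq p fn)^[m + 1] h x) +
              B.toFun (fun k => gkSeq p fn g (k + 1) x))) :=
  stmt_13_general fn p hp hpsum g
end
end
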